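/- arXiv:1003.3138 — 5 statements merged into one kernel-verified Lean document; each statement's English description precedes it below -/
import Mathlib

section
/- Let π be an 𝓔-measurable quasi-probability kernel, let D ∈ 𝓔, and let ρ be the restriction of π to D. Then ρ is a refinement of π if and only if μ(D) = 1 for every μ ∈ J_𝓔(π). -/
open MeasureTheory
open scoped ENNReal

variable {X : Type*}

/-- A quasi-probability kernel on `(X, mX)`: `π(·,F)` is `mX`-measurable for each
`mX`-measurable `F`, and each `π(x,·)` is a measure with total mass `0` or `1`. -/
def IsQPK (mX : MeasurableSpace X) (π : X → @Measure X mX) : Prop :=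
  (∀ F : Set X, MeasurableSet[mX] F → Measurable[mX] fun x => π x F) ∧
    (∀ x : X, π x Set.univ = 0 ∨ π x Set.univ = 1)

/-- The support `S_π = {x : π(x,X) = 1}` of a quasi-probability kernel. -/
def qpkSupp (mX : MeasurableSpace X) (π : X → @Measure X mX) : Set X :=
  {x | π x Set.univ = 1}

/-- `π` is `𝓔`-measurable: `π(·,F)` is `𝓔`-measurable for each `mX`-measurable `F`. -/
def EMeasK (mX 𝓔 : MeasurableSpace X) (π : X → @Measure X mX) : Prop :=
  ∀ F : Set X, MeasurableSet[mX] F → Measurable[𝓔] fun x => π x F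

/-- `J_𝓔(π)`: the set of probability measures `μ` on `(X, mX)` with
`μ(E ∩ F) = ∫_E π(·,F) dμ` for all `E ∈ 𝓔` and `F ∈ mX`. -/
def J (mX 𝓔 : MeasurableSpace X) (π : X → @Measure X mX) : Set (@Measure X mX) :=
  {μ | IsProbabilityMeasure μ ∧ ∀ E F : Set X, MeasurableSet[𝓔] E → MeasurableSet[mX] F →
      μ (E ∩ F) = ∫⁻ x in E, π x F ∂μ}

/-- `J_⋆(π)`: the set of probability measures `μ` on `(X, mX)` with
`μ(F) = ∫ π(·,F) dμ` for all `F ∈ mX`. -/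
def Jstar (mX : MeasurableSpace X) (π : X → @Measure X mX) : Set (@Measure X mX) :=
  {μ | IsProbabilityMeasure μ ∧ ∀ F : Set X, MeasurableSet[mX] F → μ F = ∫⁻ x, π x F ∂μ}

/-- `π` is proper as an `𝓔`-measurable kernel: `π(x, E ∩ F) = 1_E(x)·π(x,F)` for all
`E ∈ 𝓔`, `F ∈ mX` and `x ∈ X`. -/
def IsProperK (mX 𝓔 : MeasurableSpace X) (π : X → @Measure X mX) : Prop :=
  ∀ E F : Set X, MeasurableSet[𝓔] E → MeasurableSet[mX] F → ∀ x : X,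
    π x (E ∩ F) = Set.indicator E (fun _ => π x F) x

/-- `μ` is trivial on `𝓔` if `μ(E) ∈ {0,1}` for every `E ∈ 𝓔`. -/
def IsTrivialOn (mX 𝓔 : MeasurableSpace X) (μ : @Measure X mX) : Prop :=
  ∀ E : Set X, MeasurableSet[𝓔] E → μ E = 0 ∨ μ E = 1

/-- `π` is adapted if `π(x,·) ∈ J_𝓔(π)` for every `x ∈ S_π`. -/
def IsAdaptedK (mX 𝓔 : MeasurableSpace X) (π : X → @Measure X mX) : Prop :=
  ∀ x ∈ qpkSupp mX π, π x ∈ J mX 𝓔 π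

/-- `π` is normal if it is adapted and `π(x,·)` is trivial on `𝓔` for every `x ∈ S_π`. -/
def IsNormalK (mX 𝓔 : MeasurableSpace X) (π : X → @Measure X mX) : Prop :=
  IsAdaptedK mX 𝓔 π ∧ ∀ x ∈ qpkSupp mX π, IsTrivialOn mX 𝓔 (π x)

/-- The restriction of `π` to `D`: the kernel `ρ(x,F) = 1_D(x)·π(x,F)`. -/
noncomputable def kerRestrict (mX : MeasurableSpace X) (π : X → @Measure X mX) (D : Set X) :
    X → @Measure X mX :=
  Set.indicator D π

/-- `ρ` is a refinement of `π`: an `𝓔`-measurable quasi-probability kernel which is the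
restriction of `π` to some `D ∈ 𝓔` and satisfies `J_𝓔(ρ) = J_𝓔(π)`. -/
def IsRefinement (mX 𝓔 : MeasurableSpace X) (π ρ : X → @Measure X mX) : Prop :=
  IsQPK mX ρ ∧ EMeasK mX 𝓔 ρ ∧ (∃ D : Set X, MeasurableSet[𝓔] D ∧ ρ = kerRestrict mX π D) ∧
    J mX 𝓔 ρ = J mX 𝓔 π

/-- `Δ^π_μ = {x ∈ S_π : π(x,·) = μ}`. -/
def DeltaM (mX : MeasurableSpace X) (π : X → @Measure X mX) (μ : @Measure X mX) : Set X :=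
  {x ∈ qpkSupp mX π | π x = μ}

/-- `Δ^π_x = {y ∈ S_π : π(y,·) = π(x,·)}`. -/
def Delta (mX : MeasurableSpace X) (π : X → @Measure X mX) (x : X) : Set X :=
  {y ∈ qpkSupp mX π | π y = π x}

/-- `𝓝_π`: the σ-algebra of `mX`-measurable sets `N` such that for every `x ∈ S_π` either
`Δ^π_x ⊆ N` or `Δ^π_x ∩ N = ∅`. -/
def NSigma (mX : MeasurableSpace X) (π : X → @Measure X mX) : MeasurableSpace X where
  MeasurableSet' N := MeasurableSet[mX] N ∧
    ∀ x ∈ qpkSupp mX π, Delta mX π x ⊆ N ∨ Delta mX π x ∩ N = ∅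
  measurableSet_empty :=
    ⟨@MeasurableSet.empty X mX, fun _ _ => Or.inr (Set.inter_empty _)⟩
  measurableSet_compl := by
    rintro N ⟨hN, h⟩
    refine ⟨hN.compl, fun x hx => ?_⟩
    rcases h x hx with h1 | h1
    · refine Or.inr ?_
      ext y
      simp only [Set.mem_inter_iff, Set.mem_compl_iff, Set.mem_empty_iff_false, iff_false,
        not_and, not_not]
      exact fun hy => h1 hy
    · exact Or.inl fun y hy hyN => (Set.eq_empty_iff_forall_notMem.1 h1) y ⟨hy, hyN⟩
  measurableSet_iUnion := by
    intro f hf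
    refine ⟨MeasurableSet.iUnion fun i => (hf i).1, fun x hx => ?_⟩
    by_cases hc : ∃ i, Delta mX π x ⊆ f i
    · rcases hc with ⟨i, hi⟩
      exact Or.inl (hi.trans (Set.subset_iUnion f i))
    · push_neg at hc
      refine Or.inr ?_
      ext y
      simp only [Set.mem_inter_iff, Set.mem_iUnion, Set.mem_empty_iff_false, iff_false, not_and]
      rintro hy ⟨i, hyi⟩
      rcases (hf i).2 x hx with h1 | h1
      · exact hc i h1
      · exact (Set.eq_empty_iff_forall_notMem.1 h1) y ⟨hy, hyi⟩

/-- `𝓢_π`: the least σ-algebra making all the functions `π(·,F)`, `F ∈ mX`, measurable,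
i.e. the σ-algebra generated by these functions. -/
def Spi (mX : MeasurableSpace X) (π : X → @Measure X mX) : MeasurableSpace X :=
  ⨆ F ∈ {F : Set X | MeasurableSet[mX] F},
    MeasurableSpace.comap (fun x => π x F) inferInstance

/-! Since `ρ(·,F) = 1_D π(·,F)`, we have `∫_E ρ(·,F) dμ = ∫_{E ∩ D} π(·,F) dμ`. Testing the
defining identity of `J_𝓔(ρ)` with `E = F = X` shows that every `μ ∈ J_𝓔(ρ)` gives full mass
to `D`, and for a `μ` that gives full mass to `D` the defining identities of `J_𝓔(ρ)` and
`J_𝓔(π)` coincide. -/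

section kerRestrict

variable {mX 𝓔 : MeasurableSpace X} {π : X → @Measure X mX} {D : Set X}

theorem kerRestrict_apply (x : X) (F : Set X) :
    kerRestrict mX π D x F = D.indicator (fun y => π y F) x := by
  by_cases hx : x ∈ D <;> simp [kerRestrict, hx]

theorem IsQPK.measure_univ_le_one (hπ : IsQPK mX π) (x : X) : π x Set.univ ≤ 1 := by
  rcases hπ.2 x with h | h <;> simp [h]

theorem IsQPK.kerRestrict (hπ : IsQPK mX π) (hD : MeasurableSet[mX] D) :
    IsQPK mX (kerRestrict mX π D) := by
  refine ⟨fun F hF => ?_, fun x => ?_⟩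
  · simpa only [kerRestrict_apply] using (hπ.1 F hF).indicator hD
  · by_cases hx : x ∈ D
    · simpa [kerRestrict_apply, hx] using hπ.2 x
    · simp [kerRestrict_apply, hx]

theorem EMeasK.kerRestrict (hπ : EMeasK mX 𝓔 π) (hD : MeasurableSet[𝓔] D) :
    EMeasK mX 𝓔 (kerRestrict mX π D) := fun F hF => by
  simpa only [kerRestrict_apply] using (hπ F hF).indicator hD

theorem setLIntegral_kerRestrict (hD : MeasurableSet[mX] D) (μ : @Measure X mX) (E F : Set X) :
    ∫⁻ x in E, kerRestrict mX π D x F ∂μ = ∫⁻ x in E ∩ D, π x F ∂μ := by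
  simp only [kerRestrict_apply]
  rw [lintegral_indicator hD, Measure.restrict_restrict hD, Set.inter_comm]

theorem measure_eq_one_of_mem_J_kerRestrict (hπ : ∀ x, π x Set.univ ≤ 1)
    (hD : MeasurableSet[mX] D) {μ : @Measure X mX} (hμ : μ ∈ J mX 𝓔 (kerRestrict mX π D)) :
    μ D = 1 := by
  obtain ⟨hprob, hμJ⟩ := hμ
  have hmass := hμJ Set.univ Set.univ MeasurableSet.univ MeasurableSet.univ
  rw [Set.univ_inter, measure_univ, setLIntegral_kerRestrict hD, Set.univ_inter] at hmass
  refine le_antisymm prob_le_one ?_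
  calc (1 : ℝ≥0∞) = ∫⁻ x in D, π x Set.univ ∂μ := hmass
    _ ≤ ∫⁻ _ in D, 1 ∂μ := setLIntegral_mono measurable_const fun x _ => hπ x
    _ = μ D := setLIntegral_one D

theorem mem_J_kerRestrict_iff (hD : MeasurableSet[mX] D) {μ : @Measure X mX}
    (hμD : μ Dᶜ = 0) : μ ∈ J mX 𝓔 (kerRestrict mX π D) ↔ μ ∈ J mX 𝓔 π := by
  have hrestrict (E : Set X) : μ.restrict (E ∩ D) = μ.restrict E :=
    Measure.restrict_congr_set (inter_ae_eq_left_of_ae_eq_univ (ae_eq_univ.mpr hμD))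
  simp only [J, Set.mem_ofPred_eq, setLIntegral_kerRestrict hD, hrestrict]

end kerRestrict

theorem stmt0_general (mX : MeasurableSpace X)
    (𝓔 : MeasurableSpace X) (h𝓔 : 𝓔 ≤ mX)
    (π : X → @Measure X mX) (hπ : IsQPK mX π) (hπE : EMeasK mX 𝓔 π)
    (D : Set X) (hD : MeasurableSet[𝓔] D)
    (ρ : X → @Measure X mX) (hρ : ρ = kerRestrict mX π D) :
    IsRefinement mX 𝓔 π ρ ↔ ∀ μ ∈ J mX 𝓔 π, μ D = 1 := by
  subst hρ
  have hDm : MeasurableSet[mX] D := h𝓔 D hD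
  have hnull {μ : @Measure X mX} (hμ : IsProbabilityMeasure μ) (hμD : μ D = 1) : μ Dᶜ = 0 :=
    (prob_compl_eq_zero_iff hDm).mpr hμD
  constructor
  · rintro ⟨-, -, -, hJ⟩ μ hμ
    exact measure_eq_one_of_mem_J_kerRestrict hπ.measure_univ_le_one hDm (hJ ▸ hμ)
  · intro hJD
    refine ⟨hπ.kerRestrict hDm, hπE.kerRestrict hD, ⟨D, hD, rfl⟩,
      Set.ext fun μ => ⟨fun hμ => ?_, fun hμ => ?_⟩⟩
    · have hμD := measure_eq_one_of_mem_J_kerRestrict hπ.measure_univ_le_one hDm hμ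
      exact (mem_J_kerRestrict_iff hDm (hnull hμ.1 hμD)).mp hμ
    · exact (mem_J_kerRestrict_iff hDm (hnull hμ.1 (hJD μ hμ))).mpr hμ

/-- `ρ`, the restriction of `π` to `D ∈ 𝓔`, is a refinement of `π` iff
`μ(D) = 1` for every `μ ∈ J_𝓔(π)`. -/
theorem stmt0 (mX : MeasurableSpace X) (hCG : @MeasurableSpace.CountablyGenerated X mX)
    (𝓔 : MeasurableSpace X) (h𝓔 : 𝓔 ≤ mX)
    (π : X → @Measure X mX) (hπ : IsQPK mX π) (hπE : EMeasK mX 𝓔 π)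
    (D : Set X) (hD : MeasurableSet[𝓔] D)
    (ρ : X → @Measure X mX) (hρ : ρ = kerRestrict mX π D) :
    IsRefinement mX 𝓔 π ρ ↔ ∀ μ ∈ J mX 𝓔 π, μ D = 1 :=
  stmt0_general mX 𝓔 h𝓔 π hπ hπE D hD ρ hρ
end

section
/- Every proper 𝓔-measurable quasi-probability kernel π is normal; that is, for every x ∈ S_π the measure π(x,·) belongs to J_𝓔(π) and is trivial on 𝓔. -/
open MeasureTheory
open scoped ENNReal

variable {X : Type*}

/- A proper kernel sees every `E ∈ 𝓔` only through whether `x ∈ E`: on `𝓔` the measure `π(x,·)`,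
`x ∈ S_π`, is the Dirac mass at `x`. Hence it is trivial on `𝓔`, and integrating an
`𝓔`-measurable function such as `1_E · π(·,F)` against it evaluates the function at `x`, which
by properness again is `π(x, E ∩ F)`. -/

section DiracOnSubSigma

variable {m mX : MeasurableSpace X} {μ : @Measure X mX} {x : X}

theorem trim_eq_dirac_of_apply_eq_indicator (hm : m ≤ mX)
    (hμ : ∀ E : Set X, MeasurableSet[m] E → μ E = E.indicator 1 x) :
    μ.trim hm = @Measure.dirac X m x :=
  @Measure.ext X m _ _ fun E hE => by
    rw [trim_measurableSet_eq hm hE, hμ E hE, @Measure.dirac_apply' X m E x hE]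

theorem lintegral_eq_apply_of_trim_eq_dirac (hm : m ≤ mX)
    (hμ : μ.trim hm = @Measure.dirac X m x) {f : X → ℝ≥0∞} (hf : Measurable[m] f) :
    ∫⁻ y, f y ∂μ = f x := by
  rw [← lintegral_trim hm hf, hμ, @lintegral_dirac' X m x f hf]

end DiracOnSubSigma

section ProperKernel

variable {mX 𝓔 : MeasurableSpace X} {π : X → @Measure X mX} {x : X}

theorem IsProperK.apply_eq_indicator (hprop : IsProperK mX 𝓔 π) (hx : x ∈ qpkSupp mX π)
    {E : Set X} (hE : MeasurableSet[𝓔] E) :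
    π x E = E.indicator 1 x := by
  have h := hprop E Set.univ hE MeasurableSet.univ x
  rw [Set.inter_univ] at h
  rw [h, show π x Set.univ = 1 from hx]
  rfl

theorem IsProperK.isTrivialOn (hprop : IsProperK mX 𝓔 π) (hx : x ∈ qpkSupp mX π) :
    IsTrivialOn mX 𝓔 (π x) := fun E hE => by
  rw [hprop.apply_eq_indicator hx hE]
  by_cases hxE : x ∈ E <;> simp [hxE]

theorem IsProperK.mem_J (h𝓔 : 𝓔 ≤ mX) (hπE : EMeasK mX 𝓔 π) (hprop : IsProperK mX 𝓔 π)
    (hx : x ∈ qpkSupp mX π) :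
    π x ∈ J mX 𝓔 π := by
  refine ⟨⟨hx⟩, fun E F hE hF => ?_⟩
  have hdirac :=
    trim_eq_dirac_of_apply_eq_indicator h𝓔 fun E hE => hprop.apply_eq_indicator hx hE
  calc π x (E ∩ F) = E.indicator (fun y => π y F) x := hprop E F hE hF x
    _ = ∫⁻ y, E.indicator (fun y => π y F) y ∂(π x) :=
        (lintegral_eq_apply_of_trim_eq_dirac h𝓔 hdirac ((hπE F hF).indicator hE)).symm
    _ = ∫⁻ y in E, π y F ∂(π x) := lintegral_indicator (h𝓔 E hE) _

end ProperKernel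

theorem stmt1_general (mX : MeasurableSpace X)
    (𝓔 : MeasurableSpace X) (h𝓔 : 𝓔 ≤ mX)
    (π : X → @Measure X mX) (hπE : EMeasK mX 𝓔 π)
    (hprop : IsProperK mX 𝓔 π) :
    IsNormalK mX 𝓔 π :=
  ⟨fun _ hx => hprop.mem_J h𝓔 hπE hx, fun _ hx => hprop.isTrivialOn hx⟩

/-- every proper `𝓔`-measurable quasi-probability kernel is normal. -/
theorem stmt1 (mX : MeasurableSpace X) (hCG : @MeasurableSpace.CountablyGenerated X mX)
    (𝓔 : MeasurableSpace X) (h𝓔 : 𝓔 ≤ mX)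
    (π : X → @Measure X mX) (hπ : IsQPK mX π) (hπE : EMeasK mX 𝓔 π)
    (hprop : IsProperK mX 𝓔 π) :
    IsNormalK mX 𝓔 π :=
  stmt1_general mX 𝓔 h𝓔 π hπE hprop
end

section
/- Let π be an adapted 𝓔-measurable quasi-probability kernel and let τ be an arbitrary (not necessarily 𝓔-measurable) quasi-probability kernel such that J_𝓔(π) ⊆ J_⋆(τ). Then πτ = π. In particular, ππ = π. -/
open MeasureTheory
open scoped ENNReal

variable {X : Type*}

section

variable {mX 𝓔 : MeasurableSpace X} {π τ : X → @Measure X mX}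

theorem eq_zero_of_notMem_qpkSupp {x : X} (hmass : π x Set.univ = 0 ∨ π x Set.univ = 1)
    (hx : x ∉ qpkSupp mX π) : π x = 0 :=
  Measure.measure_univ_eq_zero.mp (hmass.resolve_right hx)

theorem J_subset_Jstar : J mX 𝓔 π ⊆ Jstar mX π := by
  rintro μ ⟨hμ, hJ⟩
  refine ⟨hμ, fun F hF => ?_⟩
  simpa using hJ Set.univ F MeasurableSet.univ hF

theorem lintegral_comp_eq_of_isAdaptedK (hmass : ∀ x, π x Set.univ = 0 ∨ π x Set.univ = 1)
    (had : IsAdaptedK mX 𝓔 π) (hJ : J mX 𝓔 π ⊆ Jstar mX τ) (x : X) {F : Set X}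
    (hF : MeasurableSet[mX] F) : ∫⁻ y, τ y F ∂(π x) = π x F := by
  by_cases hx : x ∈ qpkSupp mX π
  · exact ((hJ (had x hx)).2 F hF).symm
  · simp [eq_zero_of_notMem_qpkSupp (hmass x) hx]

end

theorem stmt3_general (mX : MeasurableSpace X)
    (𝓔 : MeasurableSpace X)
    (π : X → @Measure X mX) (hπ : IsQPK mX π)
    (had : IsAdaptedK mX 𝓔 π)
    (τ : X → @Measure X mX) (hJ : J mX 𝓔 π ⊆ Jstar mX τ) :
    (∀ x : X, ∀ F : Set X, MeasurableSet[mX] F → ∫⁻ y, τ y F ∂(π x) = π x F) ∧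
      (∀ x : X, ∀ F : Set X, MeasurableSet[mX] F → ∫⁻ y, π y F ∂(π x) = π x F) :=
  ⟨fun x _ hF => lintegral_comp_eq_of_isAdaptedK hπ.2 had hJ x hF,
    fun x _ hF => lintegral_comp_eq_of_isAdaptedK hπ.2 had J_subset_Jstar x hF⟩

/-- if `π` is adapted and `τ` is a quasi-probability kernel with
`J_𝓔(π) ⊆ J_⋆(τ)` then `πτ = π`; in particular `ππ = π`. -/
theorem stmt3 (mX : MeasurableSpace X) (hCG : @MeasurableSpace.CountablyGenerated X mX)
    (𝓔 : MeasurableSpace X) (h𝓔 : 𝓔 ≤ mX)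
    (π : X → @Measure X mX) (hπ : IsQPK mX π) (hπE : EMeasK mX 𝓔 π)
    (had : IsAdaptedK mX 𝓔 π)
    (τ : X → @Measure X mX) (hτ : IsQPK mX τ) (hJ : J mX 𝓔 π ⊆ Jstar mX τ) :
    (∀ x : X, ∀ F : Set X, MeasurableSet[mX] F → ∫⁻ y, τ y F ∂(π x) = π x F) ∧
      (∀ x : X, ∀ F : Set X, MeasurableSet[mX] F → ∫⁻ y, π y F ∂(π x) = π x F) :=
  stmt3_general mX 𝓔 π hπ had τ hJ
end

section
/- Let π be an 𝓔-measurable quasi-probability kernel and μ ∈ J_𝓔(π). Then μ(Δ^π_μ) = 1 if and only if μ is trivial on 𝓔. -/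
/-!
Countable generation gives a countable π-system `C ∋ X` generating the σ-algebra, and two
probability measures agreeing on `C` coincide; so `Δ^π_μ = ⋂_{s ∈ C} {π(·,s) = μ(s)}`, a
countable intersection of `𝓔`-measurable sets. If `π(x,·) = μ` for `μ`-a.e. `x`, then
`μ(E) = μ(E ∩ E) = ∫_E π(·,E) dμ = μ(E)²` for `E ∈ 𝓔`. Conversely, if `μ` is trivial on `𝓔`,
every `𝓔`-measurable function to `ℝ≥0∞` is `μ`-a.e. constant; integrating `π(·,s)` identifies
the constant as `μ(s)`, so each of the countably many conditions defining `Δ^π_μ` holds a.e.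
-/

open MeasureTheory
open scoped ENNReal

variable {X : Type*}

theorem MeasurableSpace.exists_countable_isPiSystem_generateFrom {α : Type*}
    [m : MeasurableSpace α] [CountablyGenerated α] :
    ∃ C : Set (Set α), C.Countable ∧ IsPiSystem C ∧ Set.univ ∈ C ∧ m = generateFrom C := by
  obtain ⟨b, hbc, rfl⟩ := CountablyGenerated.isCountablyGenerated (α := α)
  refine ⟨Set.sInter '' {T | T.Finite ∧ T ⊆ b},
    (Set.countable_ofPred_finite_subset hbc).image _, ?_,
    ⟨∅, ⟨Set.finite_empty, Set.empty_subset b⟩, Set.sInter_empty⟩, le_antisymm ?_ ?_⟩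
  · rintro _ ⟨S, ⟨hSf, hSb⟩, rfl⟩ _ ⟨T, ⟨hTf, hTb⟩, rfl⟩ -
    exact ⟨S ∪ T, ⟨hSf.union hTf, Set.union_subset hSb hTb⟩, Set.sInter_union S T⟩
  · refine generateFrom_mono fun s hs => ?_
    exact ⟨{s}, ⟨Set.finite_singleton s, Set.singleton_subset_iff.2 hs⟩,
      Set.sInter_singleton s⟩
  · refine generateFrom_le ?_
    rintro _ ⟨T, ⟨hTf, hTb⟩, rfl⟩
    exact .sInter hTf.countable fun t ht => measurableSet_generateFrom (hTb ht)

section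

variable {mX 𝓔 : MeasurableSpace X} {π : X → @Measure X mX} {μ : @Measure X mX}

theorem IsTrivialOn.exists_ae_eq_const [IsProbabilityMeasure μ] (h𝓔 : 𝓔 ≤ mX)
    (hμ : IsTrivialOn mX 𝓔 μ) {β : Type*} [Nonempty β] [MeasurableSpace β]
    [MeasurableSpace.CountablySeparated β] {g : X → β} (hg : Measurable[𝓔] g) :
    ∃ c, g =ᵐ[μ] Function.const X c := by
  refine Filter.exists_eventuallyEq_const_of_forall_separating MeasurableSet fun U hU => ?_
  rcases hμ _ (hg hU) with h0 | h1
  · exact .inr (measure_eq_zero_iff_ae_notMem.1 h0)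
  · refine .inl ((ae_iff_measure_eq (h𝓔 _ (hg hU)).nullMeasurableSet).2 ?_)
    rw [measure_univ]
    exact h1

theorem measure_eq_lintegral_of_mem_J (hμ : μ ∈ J mX 𝓔 π) {F : Set X}
    (hF : MeasurableSet[mX] F) : μ F = ∫⁻ x, π x F ∂μ := by
  simpa using hμ.2 Set.univ F MeasurableSet.univ hF

theorem IsTrivialOn.ae_kernel_eq (h𝓔 : 𝓔 ≤ mX) (hπE : EMeasK mX 𝓔 π)
    (hμ : μ ∈ J mX 𝓔 π) (htriv : IsTrivialOn mX 𝓔 μ) {F : Set X}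
    (hF : MeasurableSet[mX] F) : ∀ᵐ x ∂μ, π x F = μ F := by
  have := hμ.1
  obtain ⟨c, hc⟩ := htriv.exists_ae_eq_const h𝓔 (hπE F hF)
  have hcF : μ F = c := by
    rw [measure_eq_lintegral_of_mem_J hμ hF, lintegral_congr_ae hc]
    simp
  rwa [hcF]

theorem isTrivialOn_of_ae_kernel_eq (h𝓔 : 𝓔 ≤ mX) (hμ : μ ∈ J mX 𝓔 π)
    (h : ∀ᵐ x ∂μ, π x = μ) : IsTrivialOn mX 𝓔 μ := by
  have := hμ.1
  intro E hE
  have hEE : μ E * 1 = μ E * μ E := by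
    calc μ E * 1 = μ (E ∩ E) := by rw [Set.inter_self, mul_one]
      _ = ∫⁻ x in E, π x E ∂μ := hμ.2 E E hE (h𝓔 E hE)
      _ = ∫⁻ _ in E, μ E ∂μ :=
        lintegral_congr_ae (ae_restrict_of_ae (h.mono fun x hx => by dsimp only; rw [hx]))
      _ = μ E * μ E := setLIntegral_const E (μ E)
  by_cases h0 : μ E = 0
  · exact .inl h0
  · exact .inr ((ENNReal.mul_right_inj h0 (measure_ne_top μ E)).1 hEE).symm

theorem exists_countable_deltaM_eq_biInter (hCG : @MeasurableSpace.CountablyGenerated X mX)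
    [IsProbabilityMeasure μ] :
    ∃ C : Set (Set X), C.Countable ∧ (∀ s ∈ C, MeasurableSet[mX] s) ∧
      DeltaM mX π μ = ⋂ s ∈ C, {x | π x s = μ s} := by
  obtain ⟨C, hCc, hCpi, hCuniv, hgen⟩ :=
    MeasurableSpace.exists_countable_isPiSystem_generateFrom (α := X)
  refine ⟨C, hCc, fun s hs => hgen ▸ MeasurableSpace.measurableSet_generateFrom hs, ?_⟩
  ext x
  simp only [DeltaM, qpkSupp, Set.mem_ofPred_eq, Set.mem_iInter]
  constructor
  · rintro ⟨-, rfl⟩ s -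
    rfl
  · intro hx
    have hx1 : π x Set.univ = 1 := by simpa using hx _ hCuniv
    have : IsFiniteMeasure (π x) := ⟨by simp [hx1]⟩
    exact ⟨hx1, ext_of_generate_finite C hgen hCpi hx (by simp [hx1])⟩

end

theorem stmt5_general (mX : MeasurableSpace X) (hCG : @MeasurableSpace.CountablyGenerated X mX)
    (𝓔 : MeasurableSpace X) (h𝓔 : 𝓔 ≤ mX)
    (π : X → @Measure X mX) (hπE : EMeasK mX 𝓔 π)
    (μ : @Measure X mX) (hμ : μ ∈ J mX 𝓔 π) :
    μ (DeltaM mX π μ) = 1 ↔ IsTrivialOn mX 𝓔 μ := by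
  have := hμ.1
  obtain ⟨C, hCc, hCm, hΔ⟩ := exists_countable_deltaM_eq_biInter (π := π) (μ := μ) hCG
  have hΔm : MeasurableSet[𝓔] (DeltaM mX π μ) :=
    hΔ ▸ .biInter hCc fun s hs => hπE s (hCm s hs) (measurableSet_singleton _)
  rw [← prob_compl_eq_zero_iff (h𝓔 _ hΔm), measure_eq_zero_iff_ae_notMem]
  simp only [Set.mem_compl_iff, not_not]
  constructor
  · intro h
    exact isTrivialOn_of_ae_kernel_eq h𝓔 hμ (h.mono fun x hx => hx.2)
  · intro htriv
    rw [hΔ]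
    simpa [ae_ball_iff hCc] using fun s hs => htriv.ae_kernel_eq h𝓔 hπE hμ (hCm s hs)

/-- for `μ ∈ J_𝓔(π)`, `μ(Δ^π_μ) = 1` iff `μ` is trivial on `𝓔`. -/
theorem stmt5 (mX : MeasurableSpace X) (hCG : @MeasurableSpace.CountablyGenerated X mX)
    (𝓔 : MeasurableSpace X) (h𝓔 : 𝓔 ≤ mX)
    (π : X → @Measure X mX) (hπ : IsQPK mX π) (hπE : EMeasK mX 𝓔 π)
    (μ : @Measure X mX) (hμ : μ ∈ J mX 𝓔 π) :
    μ (DeltaM mX π μ) = 1 ↔ IsTrivialOn mX 𝓔 μ :=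
  stmt5_general mX hCG 𝓔 h𝓔 π hπE μ hμ
end

section
/- Let π be a quasi-probability kernel on (X,𝓕) and let 𝓢_π denote the least sub-σ-algebra of 𝓕 with respect to which π is measurable, i.e. the σ-algebra generated by the functions π(·,F), F ∈ 𝓕. Then 𝓢_π is countably generated. -/
/-!
`𝓢_π` is the pull-back along `x ↦ π(x,·)` of the σ-algebra on measures generated by the
evaluations `μ ↦ μ F`. Since every `π(x,·)` has finite mass, a π-λ argument shows that the
evaluations on a countable generating π-system containing `X` already generate the pull-back, so
`𝓢_π` is a countable supremum of pull-backs of the Borel σ-algebra of `[0, ∞]`.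
-/

open MeasureTheory
open scoped ENNReal

variable {X : Type*}

theorem MeasurableSpace.CountablyGenerated.iSup {α ι : Type*} [Countable ι]
    {m : ι → MeasurableSpace α} (h : ∀ i, @CountablyGenerated α (m i)) :
    @CountablyGenerated α (⨆ i, m i) := by
  choose b hb_countable hb_gen using
    fun i => @CountablyGenerated.isCountablyGenerated α (m i) (h i)
  refine @CountablyGenerated.mk α (⨆ i, m i)
    ⟨⋃ i, b i, Set.countable_iUnion hb_countable, ?_⟩
  rw [← iSup_generateFrom]
  exact iSup_congr hb_gen

theorem Set.Countable.generatePiSystem {α : Type*} {S : Set (Set α)} (hS : S.Countable) :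
    (generatePiSystem S).Countable := by
  have : Countable S := hS.to_subtype
  refine (Set.countable_range fun t : Finset S => ⋂ s ∈ (t : Set S), (s : Set α)).mono
    fun s hs => ?_
  induction hs with
  | base hs => exact ⟨{⟨_, hs⟩}, by simp⟩
  | inter _ _ _ ihs iht =>
    obtain ⟨a, rfl⟩ := ihs
    obtain ⟨b, rfl⟩ := iht
    exact ⟨a ∪ b, by dsimp only; rw [Finset.coe_union, Set.biInter_union]⟩

theorem MeasurableSpace.exists_countable_isPiSystem_generateFrom_eq {α : Type*}
    [m : MeasurableSpace α] [CountablyGenerated α] :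
    ∃ S : Set (Set α), S.Countable ∧ IsPiSystem S ∧ Set.univ ∈ S ∧
      m = generateFrom S := by
  refine ⟨insert Set.univ (generatePiSystem (countableGeneratingSet α)),
    countable_countableGeneratingSet.generatePiSystem.insert _,
    (isPiSystem_generatePiSystem _).insert_univ, Set.mem_insert _ _, ?_⟩
  rw [generateFrom_insert_univ, generateFrom_generatePiSystem_eq,
    generateFrom_countableGeneratingSet]

theorem MeasurableSpace.CountablyGenerated.comap_measure {α β : Type*} [MeasurableSpace β]
    [CountablyGenerated β] (μ : α → Measure β) [∀ a, IsFiniteMeasure (μ a)] :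
    @CountablyGenerated α (MeasurableSpace.comap μ Measure.instMeasurableSpace) := by
  obtain ⟨S, hS_countable, hS_pi, hS_univ, hS_gen⟩ :=
    exists_countable_isPiSystem_generateFrom_eq (α := β)
  have : Countable S := hS_countable.to_subtype
  set m : MeasurableSpace α := ⨆ s : S, MeasurableSpace.comap (fun a => μ a s) inferInstance
  have h_eval (s : S) : Measurable[m] fun a => μ a s :=
    Measurable.of_comap_le <|
      le_iSup (fun s : S => MeasurableSpace.comap (fun a => μ a s) inferInstance) s
  have hμ : Measurable[m] μ :=
    .measure_of_isPiSystem hS_gen hS_pi (fun s hs => h_eval ⟨s, hs⟩) (h_eval ⟨_, hS_univ⟩)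
  have h_eq : MeasurableSpace.comap μ Measure.instMeasurableSpace = m := by
    refine le_antisymm hμ.comap_le (iSup_le fun s => ?_)
    have hs : MeasurableSet (s : Set β) := hS_gen ▸ measurableSet_generateFrom s.2
    exact ((Measure.measurable_coe hs).comp (comap_measurable μ)).comap_le
  rw [h_eq]
  exact .iSup fun s => .comap _

theorem Spi_eq_comap (mX : MeasurableSpace X) (π : X → @Measure X mX) :
    Spi mX π = MeasurableSpace.comap π Measure.instMeasurableSpace := by
  simp only [Spi, Measure.instMeasurableSpace, MeasurableSpace.comap_iSup,
    MeasurableSpace.comap_comp]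
  rfl

/-- the least σ-algebra `𝓢_π` making `π` measurable is countably
generated. -/
theorem stmt9 (mX : MeasurableSpace X) (hCG : @MeasurableSpace.CountablyGenerated X mX)
    (π : X → @Measure X mX) (hπ : IsQPK mX π) :
    @MeasurableSpace.CountablyGenerated X (Spi mX π) := by
  have (x : X) : IsFiniteMeasure (π x) := ⟨by rcases hπ.2 x with h | h <;> simp [h]⟩
  rw [Spi_eq_comap]
  exact .comap_measure π
end
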